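/- Let σ > 0, δ > 0, z ∈ ℝ, θ₀ ∈ ℝ, and let π₀ : ℝ → ℝ be nonnegative, integrable, and continuous at θ₀. Set x̄ₙ = θ₀ + z·σ/√n. Then √n · ∫_{θ₀−δ}^{θ₀+δ} exp(−n·(x̄ₙ − θ)²/(2σ²)) · π₀(θ) dθ converges to σ·√(2π)·π₀(θ₀) as n → ∞. In particular, the numerator of the interval-null Bayes factor is of order n^{−1/2}. -/

import Mathlib

/-!
With `c = √n / σ`, the likelihood rescaled by `√n` is `σ √(2π)` times `c φ(c (θ₀ - θ))`, where `φ`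
is the density of `N(-z, 1)`. As `c → ∞` these kernels form an approximate identity at `θ₀`, and
the truncated prior `1_{(θ₀-δ, θ₀+δ]} π₀` is integrable and continuous at `θ₀`, so the integral
tends to `σ √(2π) π₀ θ₀`.
-/

open Real Filter MeasureTheory
open Bornology ProbabilityTheory
open scoped NNReal Topology

theorem tendsto_norm_mul_gaussianPDFReal_cobounded (μ : ℝ) (v : ℝ≥0) :
    Tendsto (fun x : ℝ => ‖x‖ * gaussianPDFReal μ v x) (cobounded ℝ) (𝓝 0) := by
  rcases eq_or_ne v 0 with rfl | hv
  · simp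
  have ha : 0 < (2 * (v : ℝ))⁻¹ := by positivity
  set a := (2 * (v : ℝ))⁻¹
  have decay (s : ℝ) : Tendsto (fun y : ℝ => |y| ^ s * rexp (-a * y ^ 2)) (cobounded ℝ) (𝓝 0) :=
    Metric.cobounded_eq_cocompact (α := ℝ) ▸ tendsto_rpow_abs_mul_exp_neg_mul_sq_cocompact ha s
  have bound : Tendsto (fun y : ℝ => (√(2 * π * v))⁻¹ *
      (|y| ^ (1 : ℝ) * rexp (-a * y ^ 2) + |μ| * (|y| ^ (0 : ℝ) * rexp (-a * y ^ 2))))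
      (cobounded ℝ) (𝓝 0) := by
    simpa using ((decay 1).add ((decay 0).const_mul |μ|)).const_mul (√(2 * π * v))⁻¹
  refine squeeze_zero (fun x => mul_nonneg (norm_nonneg x) (gaussianPDFReal_nonneg μ v x))
    (fun x => ?_) (bound.comp (tendsto_sub_const_cobounded μ))
  have hx : |x| ≤ |x - μ| + |μ| := by simpa using abs_add_le (x - μ) μ
  simp only [Function.comp_apply, rpow_one, rpow_zero, one_mul, gaussianPDFReal, norm_eq_abs]
  rw [show -(x - μ) ^ 2 / (2 * v) = -a * (x - μ) ^ 2 by ring]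
  have := mul_le_mul_of_nonneg_right hx
    (by positivity : 0 ≤ (√(2 * π * v))⁻¹ * rexp (-a * (x - μ) ^ 2))
  nlinarith

theorem tendsto_integral_mul_gaussianPDFReal_smul {E : Type*} [NormedAddCommGroup E]
    [NormedSpace ℝ E] [CompleteSpace E] (μ : ℝ) {v : ℝ≥0} (hv : v ≠ 0) {g : ℝ → E} {x₀ : ℝ}
    (hg : Integrable g) (h'g : ContinuousAt g x₀) :
    Tendsto (fun c : ℝ => ∫ x, (c * gaussianPDFReal μ v (c * (x₀ - x))) • g x) atTop
      (𝓝 (g x₀)) := by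
  simpa using tendsto_integral_comp_smul_smul_of_integrable' (gaussianPDFReal_nonneg μ v)
    (integral_gaussianPDFReal_eq_one μ hv)
    (by simpa using tendsto_norm_mul_gaussianPDFReal_cobounded μ v) hg h'g

theorem sqrt_mul_exp_eq_mul_gaussianPDFReal {σ n : ℝ} (hσ : 0 < σ) (hn : 0 < n) (z θ₀ θ : ℝ) :
    √n * rexp (-n * ((θ₀ + z * σ / √n) - θ) ^ 2 / (2 * σ ^ 2))
      = σ * √(2 * π) * (√n / σ * gaussianPDFReal (-z) 1 (√n / σ * (θ₀ - θ))) := by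
  have hexponent : -n * ((θ₀ + z * σ / √n) - θ) ^ 2 / (2 * σ ^ 2)
      = -(√n / σ * (θ₀ - θ) - -z) ^ 2 / (2 * ((1 : ℝ≥0) : ℝ)) := by
    push_cast
    nth_rewrite 1 [← sq_sqrt hn.le]
    field_simp
    ring
  rw [gaussianPDFReal, hexponent]
  simp only [NNReal.coe_one, mul_one]
  field_simp

theorem sqrt_mul_intervalIntegral_eq_integral_gaussianPDFReal {σ n a b : ℝ} (hσ : 0 < σ)
    (hn : 0 < n) (hab : a ≤ b) (z θ₀ : ℝ) (f : ℝ → ℝ) :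
    √n * ∫ θ in a..b, rexp (-n * ((θ₀ + z * σ / √n) - θ) ^ 2 / (2 * σ ^ 2)) * f θ
      = σ * √(2 * π) * ∫ θ, (√n / σ * gaussianPDFReal (-z) 1 (√n / σ * (θ₀ - θ))) •
          (Set.Ioc a b).indicator f θ := by
  rw [intervalIntegral.integral_of_le hab, ← integral_const_mul, ← integral_const_mul,
    ← integral_indicator measurableSet_Ioc]
  congr 1 with θ
  by_cases hθ : θ ∈ Set.Ioc a b
  · rw [Set.indicator_of_mem hθ, Set.indicator_of_mem hθ, smul_eq_mul, ← mul_assoc √n,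
      sqrt_mul_exp_eq_mul_gaussianPDFReal hσ hn]
    ring
  · rw [Set.indicator_of_notMem hθ, Set.indicator_of_notMem hθ, smul_zero, mul_zero]

theorem interval_null_numerator_asymptotics_general (σ δ z θ₀ : ℝ)
    (hσ : 0 < σ) (hδ : 0 < δ) (π₀ : ℝ → ℝ)
    (hπ₀int : Integrable π₀)
    (hπ₀cont : ContinuousAt π₀ θ₀) :
    Tendsto (fun n : ℝ =>
        Real.sqrt n * ∫ θ in (θ₀ - δ)..(θ₀ + δ),
          Real.exp (-n * ((θ₀ + z * σ / Real.sqrt n) - θ) ^ 2 / (2 * σ ^ 2)) * π₀ θ)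
      atTop (nhds (σ * Real.sqrt (2 * π) * π₀ θ₀)) := by
  have hI : Set.Ioc (θ₀ - δ) (θ₀ + δ) ∈ 𝓝 θ₀ := Ioc_mem_nhds (by linarith) (by linarith)
  have hg : ContinuousAt ((Set.Ioc (θ₀ - δ) (θ₀ + δ)).indicator π₀) θ₀ :=
    hπ₀cont.congr (mem_of_superset hI fun θ hθ => (Set.indicator_of_mem hθ π₀).symm)
  have peak := (tendsto_integral_mul_gaussianPDFReal_smul (-z) one_ne_zero
    (hπ₀int.indicator measurableSet_Ioc) hg).comp (tendsto_sqrt_atTop.atTop_div_const hσ)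
  rw [Set.indicator_of_mem (mem_of_mem_nhds hI)] at peak
  refine (peak.const_mul (σ * √(2 * π))).congr' ?_
  filter_upwards [eventually_gt_atTop 0] with n hn
  exact (sqrt_mul_intervalIntegral_eq_integral_gaussianPDFReal hσ hn (by linarith) z θ₀ π₀).symm

/-- Let σ > 0, δ > 0, z ∈ ℝ, θ₀ ∈ ℝ, and let π₀ be nonnegative, integrable,
and continuous at θ₀.  With x̄ₙ = θ₀ + z·σ/√n,
√n·∫_{θ₀−δ}^{θ₀+δ} exp(−n·(x̄ₙ − θ)²/(2σ²))·π₀(θ) dθ → σ·√(2π)·π₀(θ₀) as n → ∞. -/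
theorem interval_null_numerator_asymptotics (σ δ z θ₀ : ℝ)
    (hσ : 0 < σ) (hδ : 0 < δ) (π₀ : ℝ → ℝ)
    (hπ₀nonneg : ∀ θ, 0 ≤ π₀ θ) (hπ₀int : Integrable π₀)
    (hπ₀cont : ContinuousAt π₀ θ₀) :
    Tendsto (fun n : ℝ =>
        Real.sqrt n * ∫ θ in (θ₀ - δ)..(θ₀ + δ),
          Real.exp (-n * ((θ₀ + z * σ / Real.sqrt n) - θ) ^ 2 / (2 * σ ^ 2)) * π₀ θ)
      atTop (nhds (σ * Real.sqrt (2 * π) * π₀ θ₀)) :=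
  interval_null_numerator_asymptotics_general σ δ z θ₀ hσ hδ π₀ hπ₀int hπ₀cont
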